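/- For every ρ > 1, d_TV( N(0,ρ²), N(0,1) ) = 2·( Φ(x*) − Φ(x*/ρ) ), where x* := √( 2·log ρ / (1 − ρ^{-2}) ) and Φ is the standard normal CDF. Moreover x* is the unique positive solution of ρ^{-1}·exp(−x²/(2ρ²)) = exp(−x²/2). -/

import Mathlib

open MeasureTheory ProbabilityTheory

/-- Total variation distance between two measures:
`d_TV(μ,ν) = sup_{Borel A} |μ(A) − ν(A)|`. -/
noncomputable def dTV {α : Type*} [MeasurableSpace α] (μ ν : Measure α) : ℝ :=
  ⨆ A : {s : Set α // MeasurableSet s}, |(μ A.1).toReal - (ν A.1).toReal|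

/-- Standard normal CDF `Φ`. -/
noncomputable def stdNormCDF (x : ℝ) : ℝ := ((gaussianReal 0 1) (Set.Iic x)).toReal

section Aux

open Real

lemma aux_noAtoms {v : NNReal} (hv : v ≠ 0) (m : ℝ) : NoAtoms (gaussianReal m v) :=
  ⟨fun x => gaussianReal_absolutelyContinuous m hv (measure_singleton x)⟩

lemma aux_map {ρ : ℝ} (hρ : 0 < ρ) :
    (gaussianReal 0 1).map (ρ * ·) = gaussianReal 0 (Real.toNNReal (ρ ^ 2)) := by
  rw [gaussianReal_map_const_mul]
  congr 1
  · ring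
  · ext
    simp [Real.coe_toNNReal _ (sq_nonneg ρ)]

lemma aux_Ioo {m : ℝ} {v : NNReal} (hv : v ≠ 0) {a b : ℝ} (hab : a ≤ b) :
    ((gaussianReal m v) (Set.Ioo a b)).toReal =
      ((gaussianReal m v) (Set.Iic b)).toReal - ((gaussianReal m v) (Set.Iic a)).toReal := by
  haveI : NullSingletonClass (gaussianReal m v) := aux_noAtoms hv m
  rw [measure_congr Ioo_ae_eq_Ioc, ← Set.Iic_sdiff_Iic,
    measure_diff (Set.Iic_subset_Iic.2 hab) measurableSet_Iic.nullMeasurableSet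
      (measure_ne_top _ _),
    ENNReal.toReal_sub_of_le (measure_mono (Set.Iic_subset_Iic.2 hab)) (measure_ne_top _ _)]

lemma aux_neg (x : ℝ) : stdNormCDF (-x) = 1 - stdNormCDF x := by
  haveI : NullSingletonClass (gaussianReal 0 1) := aux_noAtoms one_ne_zero 0
  have hmap : (gaussianReal 0 1).map ((-1 : ℝ) * ·) = gaussianReal 0 1 := by
    rw [gaussianReal_map_const_mul]
    congr 1
    · ring
    · ext; norm_num
  have h1 : (gaussianReal 0 1) (Set.Iic (-x)) = (gaussianReal 0 1) (Set.Ici x) := by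
    conv_lhs => rw [← hmap, Measure.map_apply (measurable_const_mul _) measurableSet_Iic]
    congr 1
    ext y
    simp only [Set.mem_preimage, Set.mem_Iic, Set.mem_Ici]
    constructor <;> intro h <;> linarith
  have h2 : (gaussianReal 0 1) (Set.Ici x) = 1 - (gaussianReal 0 1) (Set.Iic x) := by
    rw [← measure_congr Ioi_ae_eq_Ici, ← Set.compl_Iic,
      measure_compl measurableSet_Iic (measure_ne_top _ _), measure_univ]
  unfold stdNormCDF
  rw [h1, h2, ENNReal.toReal_sub_of_le prob_le_one (by simp), ENNReal.toReal_one]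

lemma aux_zpow (ρ : ℝ) : ρ ^ (-2 : ℤ) = (ρ ^ 2)⁻¹ := by
  rw [zpow_neg, show ((2:ℤ)) = ((2:ℕ):ℤ) from rfl, zpow_natCast]

lemma aux_inv_lt {ρ : ℝ} (hρ : 1 < ρ) : (ρ ^ 2)⁻¹ < 1 := by
  rw [inv_lt_one_iff₀]; right; nlinarith

lemma aux_L_pos {ρ : ℝ} (hρ : 1 < ρ) : 0 < 2 * Real.log ρ / (1 - ρ ^ (-2 : ℤ)) := by
  have h1 : 0 < Real.log ρ := Real.log_pos hρ
  rw [aux_zpow]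
  exact div_pos (by linarith) (by linarith [aux_inv_lt hρ])

lemma aux_exp_form {ρ : ℝ} (hρ : 1 < ρ) (x : ℝ) :
    ρ⁻¹ * Real.exp (-(x ^ 2) / (2 * ρ ^ 2)) =
      Real.exp (-Real.log ρ - x ^ 2 / (2 * ρ ^ 2)) := by
  have hρ0 : (0 : ℝ) < ρ := by linarith
  rw [neg_div, Real.exp_sub, Real.exp_neg, Real.exp_neg, Real.exp_log hρ0]
  ring

lemma aux_pdf_diff {ρ : ℝ} (hρ : 1 < ρ) (x : ℝ) :
    gaussianPDFReal 0 (Real.toNNReal (ρ ^ 2)) x - gaussianPDFReal 0 1 x =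
      (Real.sqrt (2 * π))⁻¹ *
        (Real.exp (-Real.log ρ - x ^ 2 / (2 * ρ ^ 2)) - Real.exp (-(x ^ 2) / 2)) := by
  have hρ0 : (0 : ℝ) < ρ := by linarith
  unfold gaussianPDFReal
  have hc : ((Real.toNNReal (ρ ^ 2) : NNReal) : ℝ) = ρ ^ 2 :=
    Real.coe_toNNReal _ (sq_nonneg ρ)
  rw [hc]
  have hsq : Real.sqrt (2 * π * ρ ^ 2) = Real.sqrt (2 * π) * ρ := by
    rw [Real.sqrt_mul (by positivity), Real.sqrt_sq hρ0.le]
  have h5 : -(x - 0) ^ 2 / (2 * ρ ^ 2) = -(x ^ 2 / (2 * ρ ^ 2)) := by ring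
  have hexp : Real.exp (-Real.log ρ - x ^ 2 / (2 * ρ ^ 2)) =
      ρ⁻¹ * Real.exp (-(x - 0) ^ 2 / (2 * ρ ^ 2)) := by
    rw [h5, Real.exp_sub, Real.exp_neg, Real.exp_log hρ0, div_eq_mul_inv, ← Real.exp_neg]
  rw [hsq, hexp, mul_inv]
  push_cast
  ring_nf

lemma aux_sign {ρ : ℝ} (hρ : 1 < ρ) (x : ℝ) :
    (-Real.log ρ - x ^ 2 / (2 * ρ ^ 2)) - (-(x ^ 2) / 2) =
      ((1 - ρ ^ (-2 : ℤ)) / 2) * (x ^ 2 - 2 * Real.log ρ / (1 - ρ ^ (-2 : ℤ))) := by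
  have h4 : (1 : ℝ) - (ρ ^ 2)⁻¹ ≠ 0 := by linarith [aux_inv_lt hρ]
  have hL : 2 * Real.log ρ / (1 - (ρ ^ 2)⁻¹) * (1 - (ρ ^ 2)⁻¹) = 2 * Real.log ρ :=
    div_mul_cancel₀ _ h4
  rw [aux_zpow]
  linear_combination hL / 2

end Aux

set_option maxHeartbeats 1000000 in
/-- For every `ρ > 1`,
`d_TV(N(0,ρ²), N(0,1)) = 2(Φ(x*) − Φ(x*/ρ))` where `x* = √(2 log ρ/(1 − ρ⁻²))`;
moreover `x*` is the unique positive solution of `ρ⁻¹ exp(−x²/(2ρ²)) = exp(−x²/2)`. -/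
theorem stmt_10 (ρ : ℝ) (hρ : 1 < ρ) :
    dTV (gaussianReal 0 (Real.toNNReal (ρ ^ 2))) (gaussianReal 0 1) =
      2 * (stdNormCDF (Real.sqrt (2 * Real.log ρ / (1 - ρ ^ (-2 : ℤ)))) -
        stdNormCDF (Real.sqrt (2 * Real.log ρ / (1 - ρ ^ (-2 : ℤ))) / ρ)) ∧
    ∀ x : ℝ, 0 < x →
      (ρ⁻¹ * Real.exp (-(x ^ 2) / (2 * ρ ^ 2)) = Real.exp (-(x ^ 2) / 2) ↔
        x = Real.sqrt (2 * Real.log ρ / (1 - ρ ^ (-2 : ℤ)))) := by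
  have hρ0 : (0 : ℝ) < ρ := by linarith
  set L : ℝ := 2 * Real.log ρ / (1 - ρ ^ (-2 : ℤ)) with hLdef
  set c : ℝ := Real.sqrt L with hcdef
  have hL : 0 < L := aux_L_pos hρ
  have hc : 0 < c := Real.sqrt_pos.2 hL
  have hc2 : c ^ 2 = L := Real.sq_sqrt hL.le
  have hk : 0 < (1 - ρ ^ (-2 : ℤ)) / 2 := by
    rw [aux_zpow]; linarith [aux_inv_lt hρ]
  set v : NNReal := Real.toNNReal (ρ ^ 2) with hvdef
  have hv : v ≠ 0 := by
    rw [hvdef]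
    exact (Real.toNNReal_pos.2 (by positivity)).ne'
  -- second conjunct
  have second : ∀ x : ℝ, 0 < x →
      (ρ⁻¹ * Real.exp (-(x ^ 2) / (2 * ρ ^ 2)) = Real.exp (-(x ^ 2) / 2) ↔ x = c) := by
    intro x hx
    rw [aux_exp_form hρ, Real.exp_eq_exp]
    constructor
    · intro h
      have h2 : ((1 - ρ ^ (-2 : ℤ)) / 2) * (x ^ 2 - L) = 0 := by
        rw [← aux_sign hρ x]; linarith
      have h3 : x ^ 2 = L := by
        rcases mul_eq_zero.1 h2 with h | h
        · exact absurd h hk.ne'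
        · linarith
      rw [hcdef, ← h3, Real.sqrt_sq hx.le]
    · intro h
      have h3 : x ^ 2 = L := by rw [h]; exact hc2
      have h6 := aux_sign hρ x
      rw [h3, hLdef, sub_self, mul_zero] at h6
      rw [h3, hLdef]
      linarith
  refine ⟨?_, second⟩
  -- first conjunct
  set pdiff : ℝ → ℝ :=
    fun x => gaussianPDFReal 0 v x - gaussianPDFReal 0 1 x with hpdiff
  have hint : Integrable pdiff volume :=
    (integrable_gaussianPDFReal 0 v).sub (integrable_gaussianPDFReal 0 1)
  have hsqrtpi : (0 : ℝ) < (Real.sqrt (2 * Real.pi))⁻¹ := by positivity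
  have hsign_nonneg : ∀ x : ℝ, L ≤ x ^ 2 → 0 ≤ pdiff x := by
    intro x hx
    rw [hpdiff]
    simp only
    rw [hvdef, aux_pdf_diff hρ x]
    have : Real.exp (-(x ^ 2) / 2) ≤ Real.exp (-Real.log ρ - x ^ 2 / (2 * ρ ^ 2)) := by
      rw [Real.exp_le_exp]
      nlinarith [aux_sign hρ x]
    nlinarith
  have hsign_nonpos : ∀ x : ℝ, x ^ 2 ≤ L → pdiff x ≤ 0 := by
    intro x hx
    rw [hpdiff]
    simp only
    rw [hvdef, aux_pdf_diff hρ x]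
    have : Real.exp (-Real.log ρ - x ^ 2 / (2 * ρ ^ 2)) ≤ Real.exp (-(x ^ 2) / 2) := by
      rw [Real.exp_le_exp]
      nlinarith [aux_sign hρ x]
    nlinarith
  set S : Set ℝ := {x : ℝ | L ≤ x ^ 2} with hSdef
  have hS : MeasurableSet S := measurableSet_le measurable_const (by measurability)
  set F : Set ℝ → ℝ :=
    fun A => ((gaussianReal 0 v) A).toReal - ((gaussianReal 0 1) A).toReal with hFdef
  have hFI : ∀ A : Set ℝ, F A = ∫ x in A, pdiff x := by
    intro A
    rw [hFdef]
    simp only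
    rw [gaussianReal_apply_eq_integral 0 hv, gaussianReal_apply_eq_integral 0 one_ne_zero,
      ENNReal.toReal_ofReal (setIntegral_nonneg_of_ae_restrict
        (ae_of_all _ fun x => gaussianPDFReal_nonneg 0 v x)),
      ENNReal.toReal_ofReal (setIntegral_nonneg_of_ae_restrict
        (ae_of_all _ fun x => gaussianPDFReal_nonneg 0 1 x)),
      ← integral_sub (integrable_gaussianPDFReal 0 v).integrableOn
        (integrable_gaussianPDFReal 0 1).integrableOn]
  set D : ℝ := ∫ x in S, pdiff x with hDdef
  have hD0 : 0 ≤ D := setIntegral_nonneg hS fun x hx => hsign_nonneg x hx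
  have hIbound : ∀ A : Set ℝ, MeasurableSet A → ∫ x in A, pdiff x ≤ D := by
    intro A hA
    have hsplit : (∫ x in A ∩ S, pdiff x) + ∫ x in A \ S, pdiff x = ∫ x in A, pdiff x :=
      integral_inter_add_diff hS hint.integrableOn
    have h1 : ∫ x in A \ S, pdiff x ≤ 0 :=
      setIntegral_nonpos (hA.diff hS) fun x hx =>
        hsign_nonpos x (le_of_not_ge fun hcon => hx.2 hcon)
    have h2 : ∫ x in A ∩ S, pdiff x ≤ D := by
      rw [hDdef]
      refine setIntegral_mono_set hint.integrableOn ?_ (Set.inter_subset_right.eventuallyLE)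
      exact (ae_restrict_iff' hS).2 (ae_of_all _ fun x hx => hsign_nonneg x hx)
    linarith
  have htotal : ∫ x, pdiff x = 0 := by
    rw [hpdiff, integral_sub (integrable_gaussianPDFReal 0 v) (integrable_gaussianPDFReal 0 1),
      integral_gaussianPDFReal_eq_one 0 hv, integral_gaussianPDFReal_eq_one 0 one_ne_zero,
      sub_self]
  have hIcompl : ∀ A : Set ℝ, MeasurableSet A →
      (∫ x in Aᶜ, pdiff x) = - ∫ x in A, pdiff x := by
    intro A hA
    have := integral_add_compl hA hint
    rw [htotal] at this
    linarith
  -- the sup equals D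
  haveI : Nonempty {s : Set ℝ // MeasurableSet s} := ⟨⟨∅, MeasurableSet.empty⟩⟩
  have habs : ∀ A : {s : Set ℝ // MeasurableSet s}, |F A.1| ≤ D := by
    rintro ⟨A, hA⟩
    rw [abs_le]
    constructor
    · have := hIbound Aᶜ hA.compl
      rw [hIcompl A hA] at this
      rw [hFI]
      simp only
      linarith
    · rw [hFI]; exact hIbound A hA
  have hdtv : dTV (gaussianReal 0 v) (gaussianReal 0 1) = D := by
    unfold dTV
    apply le_antisymm
    · exact ciSup_le habs
    · have hFS : |F S| = D := by
        rw [hFI S, ← hDdef, abs_of_nonneg hD0]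
      have hbdd : BddAbove (Set.range fun A : {s : Set ℝ // MeasurableSet s} => |F A.1|) :=
        ⟨D, by rintro y ⟨A, rfl⟩; exact habs A⟩
      calc D = |F S| := hFS.symm
        _ ≤ ⨆ A : {s : Set ℝ // MeasurableSet s}, |F A.1| := le_ciSup hbdd ⟨S, hS⟩
  rw [hdtv]
  -- compute D
  have hScompl : Sᶜ = Set.Ioo (-c) c := by
    ext x
    simp only [hSdef, Set.mem_compl_iff, Set.mem_setOf_eq, not_le, Set.mem_Ioo]
    constructor
    · intro h
      rw [← hc2] at h
      constructor <;> nlinarith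
    · rintro ⟨h1, h2⟩
      rw [← hc2]
      nlinarith
  have hFcompl : F Sᶜ = -D := by
    rw [hFI, hIcompl S hS, hDdef]
  have hμIoo : (gaussianReal 0 v) (Set.Ioo (-c) c) =
      (gaussianReal 0 1) (Set.Ioo (-(c / ρ)) (c / ρ)) := by
    rw [← aux_map hρ0, Measure.map_apply (measurable_const_mul _) measurableSet_Ioo,
      Set.preimage_const_mul_Ioo₀ _ _ hρ0, neg_div]
  have hν1 : ((gaussianReal 0 1) (Set.Ioo (-(c / ρ)) (c / ρ))).toReal =
      2 * stdNormCDF (c / ρ) - 1 := by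
    have hcρ : 0 < c / ρ := div_pos hc hρ0
    rw [aux_Ioo one_ne_zero (by linarith : -(c/ρ) ≤ c/ρ)]
    have := aux_neg (c / ρ)
    unfold stdNormCDF at this ⊢
    linarith
  have hν2 : ((gaussianReal 0 1) (Set.Ioo (-c) c)).toReal = 2 * stdNormCDF c - 1 := by
    rw [aux_Ioo one_ne_zero (by linarith : -c ≤ c)]
    have := aux_neg c
    unfold stdNormCDF at this ⊢
    linarith
  have : F Sᶜ = (2 * stdNormCDF (c / ρ) - 1) - (2 * stdNormCDF c - 1) := by
    rw [hFdef]
    simp only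
    rw [hScompl, hμIoo, hν1, hν2]
  rw [hFcompl] at this
  linarith
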